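/- arXiv:2411.04767 — 3 statements merged into one kernel-verified Lean document; each statement's English description precedes it below -/
import Mathlib

section
/- Holevo–Helstrom theorem (inequality part): Let ρ₀, ρ₁ be density matrices on ℂ^d, let λ ∈ [0,1], and let μ₀, μ₁ be positive semidefinite d×d complex matrices with μ₀ + μ₁ = I (a binary measurement). Then λ·Tr(μ₀ρ₀) + (1−λ)·Tr(μ₁ρ₁) ≤ 1/2 + (1/2)·‖λρ₀ − (1−λ)ρ₁‖₁ (the traces appearing here are real numbers). -/
open Matrix BigOperators
open scoped ComplexOrder

open Classical in
noncomputable def msqrt {n : Type*} [Fintype n] [DecidableEq n] (A : Matrix n n ℂ) :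
    Matrix n n ℂ :=
  if h : A.PosSemidef then
    (h.1.eigenvectorUnitary : Matrix n n ℂ) * diagonal ((↑) ∘ (√·) ∘ h.1.eigenvalues) *
      (star h.1.eigenvectorUnitary : Matrix n n ℂ)
  else 0

noncomputable def traceNorm {n : Type*} [Fintype n] [DecidableEq n] (A : Matrix n n ℂ) : ℝ :=
  (msqrt (Aᴴ * A)).trace.re

noncomputable def fidelity {n : Type*} [Fintype n] [DecidableEq n] (ρ₀ ρ₁ : Matrix n n ℂ) : ℝ :=
  ((msqrt (msqrt ρ₀ * ρ₁ * msqrt ρ₀)).trace.re) ^ 2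

noncomputable def tensorPow {d : ℕ} (ρ : Matrix (Fin d) (Fin d) ℂ) (n : ℕ) :
    Matrix (Fin n → Fin d) (Fin n → Fin d) ℂ :=
  Matrix.of fun i j => ∏ k, ρ (i k) (j k)

/-!
Put Δ = λρ₀ − (1−λ)ρ₁ = Δ⁺ − Δ⁻. Since μ₁ = 1 − μ₀, the left-hand side equals
1 − λ + Tr(μ₀Δ), and 0 ≤ μ₀ ≤ 1 gives Tr(μ₀Δ) ≤ Tr(μ₀Δ⁺) ≤ Tr Δ⁺ = (Tr Δ + Tr |Δ|) / 2,
where Tr Δ = 2λ − 1 and Tr |Δ| = ‖Δ‖₁.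
-/

open scoped MatrixOrder

namespace Matrix

variable {𝕜 n : Type*} [RCLike 𝕜] [Fintype n] [DecidableEq n]

lemma trace_mul_nonneg {A B : Matrix n n 𝕜} (hA : 0 ≤ A) (hB : 0 ≤ B) :
    0 ≤ (A * B).trace := by
  set s := CFC.sqrt B
  have hs : star s = s := (CFC.sqrt_nonneg B).isSelfAdjoint.star_eq
  have hconj : (A * B).trace = (star s * A * s).trace := by
    rw [← CFC.sqrt_mul_sqrt_self B hB, hs, ← mul_assoc, trace_mul_comm, mul_assoc]
  rw [hconj]
  exact (star_left_conjugate_nonneg hA s).posSemidef.trace_nonneg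

lemma trace_mul_le_trace_posPart {Δ μ : Matrix n n 𝕜} (hΔ : IsSelfAdjoint Δ) (hμ₀ : 0 ≤ μ)
    (hμ₁ : μ ≤ 1) : (μ * Δ).trace ≤ Δ⁺.trace := by
  have hμΔ : μ * Δ = μ * Δ⁺ - μ * Δ⁻ := by rw [← mul_sub, CFC.posPart_sub_negPart Δ]
  have hΔpos : Δ⁺ = μ * Δ⁺ + (1 - μ) * Δ⁺ := by rw [← add_mul, add_sub_cancel, one_mul]
  have hsplit : Δ⁺.trace - (μ * Δ).trace = ((1 - μ) * Δ⁺).trace + (μ * Δ⁻).trace := by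
    rw [hμΔ, trace_sub]
    nth_rewrite 1 [hΔpos]
    rw [trace_add]
    ring
  exact sub_nonneg.mp (hsplit ▸ add_nonneg
    (trace_mul_nonneg (sub_nonneg.mpr hμ₁) (CFC.posPart_nonneg Δ))
    (trace_mul_nonneg hμ₀ (CFC.negPart_nonneg Δ)))

end Matrix

section TraceNorm

variable {n : Type*} [Fintype n] [DecidableEq n]

lemma msqrt_eq_sqrt {A : Matrix n n ℂ} (hA : A.PosSemidef) : msqrt A = CFC.sqrt A := by
  rw [msqrt, dif_pos hA, CFC.sqrt_eq_real_sqrt _ hA.nonneg, cfcₙ_eq_cfc, hA.1.cfc_eq,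
    IsHermitian.cfc, Unitary.conjStarAlgAut_apply]
  rfl

lemma traceNorm_eq_re_trace_abs (A : Matrix n n ℂ) : traceNorm A = (CFC.abs A).trace.re := by
  rw [traceNorm, msqrt_eq_sqrt (posSemidef_conjTranspose_mul_self A)]
  rfl

lemma re_trace_mul_le_re_trace_add_traceNorm_div_two {Δ μ : Matrix n n ℂ} (hΔ : Δ.IsHermitian)
    (hμ₀ : 0 ≤ μ) (hμ₁ : μ ≤ 1) : (μ * Δ).trace.re ≤ (Δ.trace.re + traceNorm Δ) / 2 := by
  have hpos : Δ⁺.trace.re = (Δ.trace.re + (CFC.abs Δ).trace.re) / 2 := by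
    have h := congrArg (fun X : Matrix n n ℂ => X.trace.re) (CFC.abs_add_self Δ hΔ)
    simp only [two_nsmul, trace_add, Complex.add_re] at h
    linarith
  rw [traceNorm_eq_re_trace_abs, ← hpos]
  exact Complex.re_le_re (Matrix.trace_mul_le_trace_posPart hΔ hμ₀ hμ₁)

end TraceNorm

theorem holevo_helstrom_inequality_general {d : ℕ} (ρ₀ ρ₁ μ₀ μ₁ : Matrix (Fin d) (Fin d) ℂ)
    (hρ₀ : ρ₀.PosSemidef) (hρ₀t : ρ₀.trace = 1)
    (hρ₁ : ρ₁.PosSemidef) (hρ₁t : ρ₁.trace = 1)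
    (hμ₀ : μ₀.PosSemidef) (hμ₁ : μ₁.PosSemidef) (hμ : μ₀ + μ₁ = 1)
    (l : ℝ) :
    l * ((μ₀ * ρ₀).trace).re + (1 - l) * ((μ₁ * ρ₁).trace).re ≤
      1 / 2 + (1 / 2) * traceNorm ((l : ℂ) • ρ₀ - ((1 - l : ℝ) : ℂ) • ρ₁) := by
  set Δ := (l : ℂ) • ρ₀ - ((1 - l : ℝ) : ℂ) • ρ₁
  have hΔ : Δ.IsHermitian :=
    (hρ₀.1.smul (Complex.conj_ofReal l)).sub (hρ₁.1.smul (Complex.conj_ofReal _))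
  have hμ₀le : μ₀ ≤ 1 := hμ ▸ le_add_of_nonneg_right hμ₁.nonneg
  have hbound := re_trace_mul_le_re_trace_add_traceNorm_div_two hΔ hμ₀.nonneg hμ₀le
  have htrace : Δ.trace.re = 2 * l - 1 := by
    simp [Δ, hρ₀t, hρ₁t]
    ring
  obtain rfl : μ₁ = 1 - μ₀ := eq_sub_of_add_eq' hμ
  have hsuccess : l * ((μ₀ * ρ₀).trace).re + (1 - l) * (((1 - μ₀) * ρ₁).trace).re =
      1 - l + (μ₀ * Δ).trace.re := by
    simp [Δ, mul_sub, sub_mul, hρ₁t]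
    ring
  linarith

/-- Holevo–Helstrom theorem (inequality part). -/
theorem holevo_helstrom_inequality {d : ℕ} (ρ₀ ρ₁ μ₀ μ₁ : Matrix (Fin d) (Fin d) ℂ)
    (hρ₀ : ρ₀.PosSemidef) (hρ₀t : ρ₀.trace = 1)
    (hρ₁ : ρ₁.PosSemidef) (hρ₁t : ρ₁.trace = 1)
    (hμ₀ : μ₀.PosSemidef) (hμ₁ : μ₁.PosSemidef) (hμ : μ₀ + μ₁ = 1)
    (l : ℝ) (hl0 : 0 ≤ l) (hl1 : l ≤ 1) :
    l * ((μ₀ * ρ₀).trace).re + (1 - l) * ((μ₁ * ρ₁).trace).re ≤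
      1 / 2 + (1 / 2) * traceNorm ((l : ℂ) • ρ₀ - ((1 - l : ℝ) : ℂ) • ρ₁) :=
  holevo_helstrom_inequality_general ρ₀ ρ₁ μ₀ μ₁ hρ₀ hρ₀t hρ₁ hρ₁t hμ₀ hμ₁ hμ l
end

section
/- Concavity lemma (paper's Appendix): For every real number a with 0 < a < 1, the function f_a : [0, ∞) → ℝ defined by f_a(x) = √(1 − a^x) is concave on [0, ∞). -/
open Set

theorem ConcaveOn.comp_of_mapsTo {E : Type*} [AddCommGroup E] [Module ℝ E]
    {s : Set E} {t : Set ℝ} {f : E → ℝ} {g : ℝ → ℝ}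
    (hg : ConcaveOn ℝ t g) (hf : ConcaveOn ℝ s f) (hg' : MonotoneOn g t) (hst : MapsTo f s t) :
    ConcaveOn ℝ s (g ∘ f) := by
  refine ⟨hf.1, fun x hx y hy a b ha hb hab => ?_⟩
  have hmix : a • f x + b • f y ∈ t := hg.1 (hst hx) (hst hy) ha hb hab
  calc a • g (f x) + b • g (f y)
      ≤ g (a • f x + b • f y) := hg.2 (hst hx) (hst hy) ha hb hab
    _ ≤ g (f (a • x + b • y)) := hg' hmix (hst (hf.1 hx hy ha hb hab)) (hf.2 hx hy ha hb hab)

theorem concaveOn_one_sub_rpow_left {a : ℝ} (ha : 0 < a) :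
    ConcaveOn ℝ univ (fun x : ℝ => 1 - a ^ x) :=
  (concaveOn_const 1 convex_univ).sub (convexOn_rpow_left ha)

/-- Concavity of `x ↦ √(1 - a^x)` on `[0, ∞)` for `0 < a < 1`. -/
theorem concaveOn_sqrt_one_sub_rpow (a : ℝ) (ha0 : 0 < a) (ha1 : a < 1) :
    ConcaveOn ℝ (Set.Ici (0 : ℝ)) (fun x : ℝ => Real.sqrt (1 - a ^ x)) := by
  have hmaps : MapsTo (fun x : ℝ => 1 - a ^ x) (Ici 0) (Ici 0) := fun x hx =>
    sub_nonneg.2 (Real.rpow_le_one ha0.le ha1.le hx)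
  exact Real.strictConcaveOn_sqrt.concaveOn.comp_of_mapsTo
    ((concaveOn_one_sub_rpow_left ha0).subset (subset_univ _) (convex_Ici 0))
    (Real.sqrt_monotone.monotoneOn _) hmaps
end

section
/- Combined trade-off inequality for general (variable-round) verification protocols (the key inequality in the proof of Theorem 4.3): Let ρ, φ be density matrices on ℂ^d, let λ be a real number with 0 ≤ λ ≤ 2, let S be a finite set of positive natural numbers, let p : S → ℝ be nonnegative weights with ∑_{i∈S} p_i = 1, and for each i ∈ S let M_i be a Hermitian matrix on (ℂ^d)^{⊗i} with 0 ≤ M_i ≤ I in the Loewner order. Then (λ/2)·∑_{i∈S} p_i·Tr(M_i·ρ^{⊗i}) + (1 − ∑_{i∈S} p_i·Tr(M_i·φ^{⊗i})) ≥ (λ/2)·(1 − ∑_{i∈S} p_i·(1/2)·‖ρ^{⊗i} − φ^{⊗i}‖₁). -/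
/-!
For a Hermitian `Δ` with negative part `Δ₋` and an effect `M`,
`Tr(MΔ) = Tr(M(Δ + Δ₋)) - Tr Δ₋ + Tr((1 - M)Δ₋) ≥ -Tr Δ₋ = (Tr Δ - ‖Δ‖₁) / 2`.
With `Δ = ρ^{⊗i} - φ^{⊗i}`, which is traceless, and averaging over `p`, this gives `B - C ≤ A`
for the three sums `A = ∑ pᵢ Tr(Mᵢρ^{⊗i})`, `B = ∑ pᵢ Tr(Mᵢφ^{⊗i})`, `C = ∑ pᵢ ‖ρ^{⊗i} - φ^{⊗i}‖₁ / 2`.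
Hence `(λ/2)A + (1 - B) - (λ/2)(1 - C) ≥ (1 - λ/2)(1 - B) ≥ 0`, as `B ≤ 1`.
-/

open Matrix BigOperators
open scoped ComplexOrder

lemma tensorPow_conjTranspose {d : ℕ} (A : Matrix (Fin d) (Fin d) ℂ) (k : ℕ) :
    (tensorPow A k)ᴴ = tensorPow Aᴴ k := by
  ext i j
  simp [tensorPow, conjTranspose_apply, star_prod]

lemma tensorPow_mul {d : ℕ} (A B : Matrix (Fin d) (Fin d) ℂ) (k : ℕ) :
    tensorPow (A * B) k = tensorPow A k * tensorPow B k := by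
  ext i j
  simp only [tensorPow, mul_apply, of_apply, Finset.prod_univ_sum, Fintype.piFinset_univ,
    Finset.prod_mul_distrib]

lemma trace_tensorPow {d : ℕ} (A : Matrix (Fin d) (Fin d) ℂ) (k : ℕ) :
    (tensorPow A k).trace = A.trace ^ k := by
  simp only [trace, diag, tensorPow, of_apply]
  rw [← Fin.prod_const, Finset.prod_univ_sum, Fintype.piFinset_univ]

open scoped MatrixOrder

namespace Matrix

lemma PosSemidef.tensorPow {d : ℕ} {A : Matrix (Fin d) (Fin d) ℂ} (hA : A.PosSemidef) (k : ℕ) :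
    (tensorPow A k).PosSemidef := by
  obtain ⟨B, rfl⟩ := CStarAlgebra.nonneg_iff_eq_star_mul_self.mp hA.nonneg
  rw [tensorPow_mul, star_eq_conjTranspose, ← tensorPow_conjTranspose]
  exact posSemidef_conjTranspose_mul_self _

variable {n : Type*} [Fintype n] [DecidableEq n]

lemma re_trace_mul_nonneg {A B : Matrix n n ℂ} (hA : A.PosSemidef) (hB : B.PosSemidef) :
    0 ≤ (A * B).trace.re := by
  obtain ⟨C, rfl⟩ := CStarAlgebra.nonneg_iff_eq_star_mul_self.mp hB.nonneg
  rw [← mul_assoc, trace_mul_cycle, star_eq_conjTranspose]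
  exact (RCLike.nonneg_iff.mp (hA.mul_mul_conjTranspose_same C).trace_nonneg).1

lemma IsHermitian.trace_cfc {A : Matrix n n ℂ} (hA : A.IsHermitian) (f : ℝ → ℝ) :
    (cfc f A).trace = ∑ j, (f (hA.eigenvalues j) : ℂ) := by
  rw [hA.cfc_eq, IsHermitian.cfc, Unitary.conjStarAlgAut_apply, trace_mul_cycle,
    Unitary.coe_star_mul_self, one_mul, trace_diagonal]
  rfl

lemma msqrt_eq_cfc {A : Matrix n n ℂ} (hA : A.PosSemidef) : msqrt A = cfc Real.sqrt A := by
  rw [msqrt, dif_pos hA, hA.1.cfc_eq]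
  rfl

lemma IsHermitian.traceNorm_eq_sum_abs_eigenvalues {A : Matrix n n ℂ} (hA : A.IsHermitian) :
    traceNorm A = ∑ j, |hA.eigenvalues j| := by
  have hsq : A * A = cfc (fun x : ℝ => x * x) A := by
    rw [cfc_mul .., cfc_id' ..]
  have hsqrt : msqrt (Aᴴ * A) = cfc (fun x : ℝ => |x|) A := by
    rw [msqrt_eq_cfc (posSemidef_conjTranspose_mul_self A), hA.eq, hsq,
      ← cfc_comp' Real.sqrt (fun x : ℝ => x * x) A]
    exact cfc_congr fun x _ => Real.sqrt_mul_self_eq_abs x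
  rw [traceNorm, hsqrt, hA.trace_cfc, Complex.re_sum]
  rfl

lemma re_trace_sub_traceNorm_le_re_trace_mul {M A : Matrix n n ℂ} (hM : M.PosSemidef)
    (hM' : (1 - M).PosSemidef) (hA : A.IsHermitian) :
    (A.trace.re - traceNorm A) / 2 ≤ (M * A).trace.re := by
  have hsa : IsSelfAdjoint A := hA
  -- `N` is the negative part of `A`, and `A + N` its positive part.
  set N := cfc (fun x : ℝ => max (-x) 0) A
  have hN : N.PosSemidef := (cfc_nonneg fun x _ => le_max_right (-x) 0).posSemidef
  have hAN : (A + N).PosSemidef := by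
    have : A + N = cfc (fun x : ℝ => x + max (-x) 0) A := by rw [cfc_add .., cfc_id' ..]
    rw [this]
    exact (cfc_nonneg fun x _ => by linarith [le_max_left (-x) 0]).posSemidef
  have htrN : N.trace.re = (traceNorm A - A.trace.re) / 2 := by
    rw [hA.trace_cfc, hA.traceNorm_eq_sum_abs_eigenvalues, hA.trace_eq_sum_eigenvalues,
      Complex.re_sum, Complex.re_sum, ← Finset.sum_sub_distrib, Finset.sum_div]
    refine Finset.sum_congr rfl fun j _ => ?_
    simp only [Complex.ofReal_re, Complex.coe_algebraMap]
    rcases le_total 0 (hA.eigenvalues j) with h | h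
    · rw [abs_of_nonneg h, max_eq_right (by linarith)]; ring
    · rw [abs_of_nonpos h, max_eq_left (by linarith)]; ring
  have hsplit : M * A = M * (A + N) - N + (1 - M) * N := by noncomm_ring
  rw [hsplit, trace_add, trace_sub, Complex.add_re, Complex.sub_re]
  linarith [re_trace_mul_nonneg hM hAN, re_trace_mul_nonneg hM' hN]

lemma re_trace_mul_sub_half_traceNorm_le {M A B : Matrix n n ℂ} (hM : M.PosSemidef)
    (hM' : (1 - M).PosSemidef) (hA : A.IsHermitian) (hB : B.IsHermitian)
    (htr : A.trace = B.trace) :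
    (M * B).trace.re - 1 / 2 * traceNorm (A - B) ≤ (M * A).trace.re := by
  have h := re_trace_sub_traceNorm_le_re_trace_mul hM hM' (hA.sub hB)
  rw [trace_sub, htr, sub_self, mul_sub, trace_sub, Complex.sub_re] at h
  simp only [Complex.zero_re] at h
  linarith

lemma re_trace_mul_le_one {M σ : Matrix n n ℂ} (hM' : (1 - M).PosSemidef)
    (hσ : σ.PosSemidef) (hσt : σ.trace = 1) : (M * σ).trace.re ≤ 1 := by
  have h := re_trace_mul_nonneg hM' hσ
  rw [sub_mul, one_mul, trace_sub, hσt, Complex.sub_re, Complex.one_re] at h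
  linarith

end Matrix

theorem general_protocol_tradeoff_general {d : ℕ}
    (ρ φ : Matrix (Fin d) (Fin d) ℂ)
    (hρ : ρ.PosSemidef) (hρt : ρ.trace = 1)
    (hφ : φ.PosSemidef) (hφt : φ.trace = 1)
    (lam : ℝ) (hlam0 : 0 ≤ lam) (hlam2 : lam ≤ 2)
    (S : Finset ℕ)
    (p : ℕ → ℝ) (hp : ∀ i ∈ S, 0 ≤ p i) (hpsum : ∑ i ∈ S, p i = 1)
    (M : (i : ℕ) → Matrix (Fin i → Fin d) (Fin i → Fin d) ℂ)
    (hM : ∀ i ∈ S, (M i).PosSemidef) (hM' : ∀ i ∈ S, (1 - M i).PosSemidef) :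
    (lam / 2) * ∑ i ∈ S, p i * ((M i * tensorPow ρ i).trace).re +
        (1 - ∑ i ∈ S, p i * ((M i * tensorPow φ i).trace).re) ≥
      (lam / 2) *
        (1 - ∑ i ∈ S, p i * ((1 / 2) * traceNorm (tensorPow ρ i - tensorPow φ i))) := by
  have hφi : ∀ i, (tensorPow φ i).trace = 1 := fun i => by rw [trace_tensorPow, hφt, one_pow]
  have hρi : ∀ i, (tensorPow ρ i).trace = 1 := fun i => by rw [trace_tensorPow, hρt, one_pow]
  have hgap : ∑ i ∈ S, p i * ((M i * tensorPow φ i).trace).re -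
        ∑ i ∈ S, p i * ((1 / 2) * traceNorm (tensorPow ρ i - tensorPow φ i)) ≤
      ∑ i ∈ S, p i * ((M i * tensorPow ρ i).trace).re := by
    rw [← Finset.sum_sub_distrib]
    refine Finset.sum_le_sum fun i hi => ?_
    rw [← mul_sub]
    exact mul_le_mul_of_nonneg_left (re_trace_mul_sub_half_traceNorm_le (hM i hi) (hM' i hi)
      (hρ.tensorPow i).1 (hφ.tensorPow i).1 ((hρi i).trans (hφi i).symm)) (hp i hi)
  have hacc : ∑ i ∈ S, p i * ((M i * tensorPow φ i).trace).re ≤ 1 :=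
    calc _ ≤ ∑ i ∈ S, p i := Finset.sum_le_sum fun i hi => mul_le_of_le_one_right (hp i hi)
            (re_trace_mul_le_one (hM' i hi) (hφ.tensorPow i) (hφi i))
      _ = 1 := hpsum
  linarith [mul_le_mul_of_nonneg_left hgap (by linarith : 0 ≤ lam / 2),
    mul_nonneg (by linarith : 0 ≤ 1 - lam / 2) (sub_nonneg.mpr hacc)]

/-- Combined trade-off inequality for general (variable-round) verification protocols. -/
theorem general_protocol_tradeoff {d : ℕ}
    (ρ φ : Matrix (Fin d) (Fin d) ℂ)
    (hρ : ρ.PosSemidef) (hρt : ρ.trace = 1)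
    (hφ : φ.PosSemidef) (hφt : φ.trace = 1)
    (lam : ℝ) (hlam0 : 0 ≤ lam) (hlam2 : lam ≤ 2)
    (S : Finset ℕ) (hS : ∀ i ∈ S, 0 < i)
    (p : ℕ → ℝ) (hp : ∀ i ∈ S, 0 ≤ p i) (hpsum : ∑ i ∈ S, p i = 1)
    (M : (i : ℕ) → Matrix (Fin i → Fin d) (Fin i → Fin d) ℂ)
    (hM : ∀ i ∈ S, (M i).PosSemidef) (hM' : ∀ i ∈ S, (1 - M i).PosSemidef) :
    (lam / 2) * ∑ i ∈ S, p i * ((M i * tensorPow ρ i).trace).re +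
        (1 - ∑ i ∈ S, p i * ((M i * tensorPow φ i).trace).re) ≥
      (lam / 2) *
        (1 - ∑ i ∈ S, p i * ((1 / 2) * traceNorm (tensorPow ρ i - tensorPow φ i))) :=
  general_protocol_tradeoff_general ρ φ hρ hρt hφ hφt lam hlam0 hlam2 S p hp hpsum M hM hM'
end
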